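/- arXiv:1805.06765 — 15 statements merged into one kernel-verified Lean document; each statement's English description precedes it below -/
import Mathlib

section
/- Let X : ℤ → ℝ be a homogeneous second order recurrence sequence with constant coefficients, i.e. there exist p, q ∈ ℝ such that X(n) = p·X(n−1) + q·X(n−2) for all n ∈ ℤ. Then for all integers a, b, c, d, e, m: (X(d−a)·X(e−b) − X(e−a)·X(d−b))·X(m−c) = (X(d−c)·X(e−b) − X(e−c)·X(d−b))·X(m−a) + (X(d−a)·X(e−c) − X(e−a)·X(d−c))·X(m−b). -/
/-- Forward propagation: `X (t + k)` is a fixed linear combination of `X (t+1)` and `X t`. -/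
lemma aux_lin (X : ℤ → ℝ) (p q : ℝ)
    (hX : ∀ n : ℤ, X n = p * X (n - 1) + q * X (n - 2)) :
    ∀ k : ℕ, ∃ α β : ℝ, ∀ t : ℤ, X (t + k) = α * X (t + 1) + β * X t := by
  intro k
  induction k with
  | zero => exact ⟨0, 1, fun t => by simp⟩
  | succ k ih =>
    obtain ⟨α, β, h⟩ := ih
    refine ⟨α * p + β, α * q, fun t => ?_⟩
    have h1 := h (t + 1)
    have h2 := hX (t + 2)
    have e1 : (t : ℤ) + (k + 1 : ℕ) = (t + 1) + (k : ℕ) := by push_cast; ring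
    rw [show (t + 2 - 1 : ℤ) = t + 1 by ring, show (t + 2 - 2 : ℤ) = t by ring] at h2
    rw [e1, h1, show (t + 1 + 1 : ℤ) = t + 2 by ring, h2]
    ring

/-- Lemma 2 (for a general homogeneous second order linear recurrence sequence
with constant coefficients, valued in `ℝ`). -/
theorem stmt_0 (X : ℤ → ℝ) (p q : ℝ)
    (hX : ∀ n : ℤ, X n = p * X (n - 1) + q * X (n - 2))
    (a b c d e m : ℤ) :
    (X (d - a) * X (e - b) - X (e - a) * X (d - b)) * X (m - c)
      = (X (d - c) * X (e - b) - X (e - c) * X (d - b)) * X (m - a)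
        + (X (d - a) * X (e - c) - X (e - a) * X (d - c)) * X (m - b) := by
  set n0 : ℤ := min d (min e m) with hn0
  have hd : n0 ≤ d := min_le_left _ _
  have he : n0 ≤ e := le_trans (min_le_right _ _) (min_le_left _ _)
  have hm : n0 ≤ m := le_trans (min_le_right _ _) (min_le_right _ _)
  obtain ⟨αd, βd, Hd⟩ := aux_lin X p q hX (d - n0).toNat
  obtain ⟨αe, βe, He⟩ := aux_lin X p q hX (e - n0).toNat
  obtain ⟨αm, βm, Hm⟩ := aux_lin X p q hX (m - n0).toNat
  have kd : ((d - n0).toNat : ℤ) = d - n0 := Int.toNat_of_nonneg (by omega)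
  have ke : ((e - n0).toNat : ℤ) = e - n0 := Int.toNat_of_nonneg (by omega)
  have km : ((m - n0).toNat : ℤ) = m - n0 := Int.toNat_of_nonneg (by omega)
  have Hd' : ∀ u : ℤ, X (d - u) = αd * X (n0 + 1 - u) + βd * X (n0 - u) := by
    intro u
    have h := Hd (n0 - u)
    rw [kd, show (n0 - u + (d - n0) : ℤ) = d - u by ring,
      show (n0 - u + 1 : ℤ) = n0 + 1 - u by ring] at h
    exact h
  have He' : ∀ u : ℤ, X (e - u) = αe * X (n0 + 1 - u) + βe * X (n0 - u) := by
    intro u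
    have h := He (n0 - u)
    rw [ke, show (n0 - u + (e - n0) : ℤ) = e - u by ring,
      show (n0 - u + 1 : ℤ) = n0 + 1 - u by ring] at h
    exact h
  have Hm' : ∀ u : ℤ, X (m - u) = αm * X (n0 + 1 - u) + βm * X (n0 - u) := by
    intro u
    have h := Hm (n0 - u)
    rw [km, show (n0 - u + (m - n0) : ℤ) = m - u by ring,
      show (n0 - u + 1 : ℤ) = n0 + 1 - u by ring] at h
    exact h
  rw [Hd' a, Hd' b, Hd' c, He' a, He' b, He' c, Hm' a, Hm' b, Hm' c]
  ring
end

section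
/- Let X : ℤ → ℝ be a homogeneous second order recurrence sequence with constant coefficients, i.e. there exist p, q ∈ ℝ such that X(n) = p·X(n−1) + q·X(n−2) for all n ∈ ℤ. Then for all integers a, b, c, m: (X(0)² − X(b−a)·X(a−b))·X(m−c) = (X(a−c)·X(0) − X(b−c)·X(a−b))·X(m−a) + (X(0)·X(b−c) − X(b−a)·X(a−c))·X(m−b). -/
/-- Coefficient of `X n₀` when expressing `X (n₀ + k)` forward. -/
def ee (p q : ℝ) : ℕ → ℝ
  | 0 => 1
  | 1 => 0
  | (k+2) => p * ee p q (k+1) + q * ee p q k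

/-- Coefficient of `X (n₀+1)` when expressing `X (n₀ + k)` forward. -/
def ff (p q : ℝ) : ℕ → ℝ
  | 0 => 0
  | 1 => 1
  | (k+2) => p * ff p q (k+1) + q * ff p q k

theorem key_rec (X : ℤ → ℝ) (p q : ℝ)
    (hX : ∀ n : ℤ, X n = p * X (n - 1) + q * X (n - 2)) (n₀ : ℤ) :
    ∀ k : ℕ, X (n₀ + k) = ee p q k * X n₀ + ff p q k * X (n₀ + 1)
  | 0 => by simp [ee, ff]
  | 1 => by simp [ee, ff]
  | (k+2) => by
      have h1 := key_rec X p q hX n₀ (k+1)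
      have h2 := key_rec X p q hX n₀ k
      have h3 := hX (n₀ + ((k : ℤ) + 2))
      rw [show n₀ + ((k:ℤ)+2) - 1 = n₀ + ((k:ℤ)+1) by ring,
          show n₀ + ((k:ℤ)+2) - 2 = n₀ + (k:ℤ) by ring] at h3
      push_cast at h1 h2 ⊢
      rw [h3, h1, h2, ee, ff]
      ring

theorem det3 (ea fa eb fb em fm yc yc' ya ya' yb yb' x0 xab xba xac xbc xmc xma xmb : ℝ)
    (h0a : x0 = ea*ya + fa*ya') (h0b : x0 = eb*yb + fb*yb')
    (hab : xab = ea*yb + fa*yb') (hba : xba = eb*ya + fb*ya')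
    (hac : xac = ea*yc + fa*yc') (hbc : xbc = eb*yc + fb*yc')
    (hmc : xmc = em*yc + fm*yc') (hma : xma = em*ya + fm*ya')
    (hmb : xmb = em*yb + fm*yb') :
    (x0^2 - xba*xab)*xmc = (xac*x0 - xbc*xab)*xma + (x0*xbc - xba*xac)*xmb := by
  subst h0a hab hba hac hbc hmc hma hmb
  linear_combination ((ea*ya+fa*ya')*(em*yc+fm*yc') - (ea*yc+fa*yc')*(em*ya+fm*ya')) * h0b

/-- Lemma 3 (for a general homogeneous second order linear recurrence sequence
with constant coefficients, valued in `ℝ`). -/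
theorem stmt_1 (X : ℤ → ℝ) (p q : ℝ)
    (hX : ∀ n : ℤ, X n = p * X (n - 1) + q * X (n - 2))
    (a b c m : ℤ) :
    (X 0 ^ 2 - X (b - a) * X (a - b)) * X (m - c)
      = (X (a - c) * X 0 - X (b - c) * X (a - b)) * X (m - a)
        + (X 0 * X (b - c) - X (b - a) * X (a - c)) * X (m - b) := by
  set n₀ : ℤ := min a (min b m) with hn₀
  have hna : n₀ ≤ a := min_le_left _ _
  have hnb : n₀ ≤ b := le_trans (min_le_right _ _) (min_le_left _ _)
  have hnm : n₀ ≤ m := le_trans (min_le_right _ _) (min_le_right _ _)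
  obtain ⟨ka, hka⟩ : ∃ k : ℕ, a = n₀ + (k : ℤ) := ⟨(a - n₀).toNat, by omega⟩
  obtain ⟨kb, hkb⟩ : ∃ k : ℕ, b = n₀ + (k : ℤ) := ⟨(b - n₀).toNat, by omega⟩
  obtain ⟨km, hkm⟩ : ∃ k : ℕ, m = n₀ + (k : ℤ) := ⟨(m - n₀).toNat, by omega⟩
  have K := key_rec X p q hX
  have haa : X 0 = ee p q ka * X (n₀ - a) + ff p q ka * X (n₀ - a + 1) := by
    have := K (n₀ - a) ka; rw [show n₀ - a + (ka:ℤ) = 0 by omega] at this; exact this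
  have hbb : X 0 = ee p q kb * X (n₀ - b) + ff p q kb * X (n₀ - b + 1) := by
    have := K (n₀ - b) kb; rw [show n₀ - b + (kb:ℤ) = 0 by omega] at this; exact this
  have hab : X (a - b) = ee p q ka * X (n₀ - b) + ff p q ka * X (n₀ - b + 1) := by
    have := K (n₀ - b) ka; rw [show n₀ - b + (ka:ℤ) = a - b by omega] at this; exact this
  have hba : X (b - a) = ee p q kb * X (n₀ - a) + ff p q kb * X (n₀ - a + 1) := by
    have := K (n₀ - a) kb; rw [show n₀ - a + (kb:ℤ) = b - a by omega] at this; exact this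
  have hac : X (a - c) = ee p q ka * X (n₀ - c) + ff p q ka * X (n₀ - c + 1) := by
    have := K (n₀ - c) ka; rw [show n₀ - c + (ka:ℤ) = a - c by omega] at this; exact this
  have hbc : X (b - c) = ee p q kb * X (n₀ - c) + ff p q kb * X (n₀ - c + 1) := by
    have := K (n₀ - c) kb; rw [show n₀ - c + (kb:ℤ) = b - c by omega] at this; exact this
  have hmc : X (m - c) = ee p q km * X (n₀ - c) + ff p q km * X (n₀ - c + 1) := by
    have := K (n₀ - c) km; rw [show n₀ - c + (km:ℤ) = m - c by omega] at this; exact this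
  have hma : X (m - a) = ee p q km * X (n₀ - a) + ff p q km * X (n₀ - a + 1) := by
    have := K (n₀ - a) km; rw [show n₀ - a + (km:ℤ) = m - a by omega] at this; exact this
  have hmb : X (m - b) = ee p q km * X (n₀ - b) + ff p q km * X (n₀ - b + 1) := by
    have := K (n₀ - b) km; rw [show n₀ - b + (km:ℤ) = m - b by omega] at this; exact this
  exact det3 (ee p q ka) (ff p q ka) (ee p q kb) (ff p q kb) (ee p q km) (ff p q km)
    (X (n₀ - c)) (X (n₀ - c + 1)) (X (n₀ - a)) (X (n₀ - a + 1)) (X (n₀ - b)) (X (n₀ - b + 1))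
    (X 0) (X (a - b)) (X (b - a)) (X (a - c)) (X (b - c)) (X (m - c)) (X (m - a)) (X (m - b))
    haa hbb hab hba hac hbc hmc hma hmb
end

section
/- Let X, Y : ℤ → ℝ be homogeneous second order recurrence sequences satisfying the same recurrence, i.e. there exist p, q ∈ ℝ such that X(n) = p·X(n−1) + q·X(n−2) and Y(n) = p·Y(n−1) + q·Y(n−2) for all n ∈ ℤ. Let a, b, c, d, e, m be integers such that X(d−a)·Y(e−b) − X(e−a)·Y(d−b) ≠ 0. Then (X(d−a)·Y(e−b) − X(e−a)·Y(d−b))·X(m−c) = (X(d−c)·Y(e−b) − X(e−c)·Y(d−b))·X(m−a) + (X(d−a)·X(e−c) − X(e−a)·X(d−c))·Y(m−b). -/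
/-!
Shifting the index preserves the recurrence, so `n ↦ X (n - a)`, `n ↦ Y (n - b)` and
`n ↦ X (n - c)` all lie in the solution space of `z n = p z (n - 1) + q z (n - 2)`.
A solution is determined by its values at `0` and `1`, so this space has dimension at most two
and any three solutions are linearly dependent. Hence the `3 × 3` determinant of their values at
`d`, `e`, `m` vanishes, and expanding it along the last row is the claimed identity.
-/

def secondOrderSolSpace {R : Type*} [CommRing R] (p q : R) : Submodule R (ℤ → R) where
  carrier := {z | ∀ n, z n = p * z (n - 1) + q * z (n - 2)}
  add_mem' {z w} hz hw n := by simp only [Pi.add_apply, hz n, hw n]; ring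
  zero_mem' n := by simp
  smul_mem' r z hz n := by simp only [Pi.smul_apply, smul_eq_mul, hz n]; ring

namespace secondOrderSolSpace

section CommRing

variable {R : Type*} [CommRing R] {p q : R} {z : ℤ → R}

theorem shift_mem (hz : z ∈ secondOrderSolSpace p q) (a : ℤ) :
    (fun n => z (n - a)) ∈ secondOrderSolSpace p q := fun n => by
  simpa only [sub_right_comm] using hz (n - a)

variable [NoZeroDivisors R]

theorem eq_zero_of_succ_eq_zero (hz : z ∈ secondOrderSolSpace p q) {j : ℤ}
    (hj : z j = 0) (hj₁ : z (j + 1) = 0) : z (j - 1) = 0 := by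
  have hnext : q * z (j - 1) = 0 := by
    have := hz (j + 1)
    rw [add_sub_cancel_right, add_sub_assoc, show (1 : ℤ) - 2 = -1 by norm_num, ← sub_eq_add_neg,
      hj, hj₁] at this
    linear_combination -this
  rcases mul_eq_zero.1 hnext with hq | h
  · -- for `q = 0` the recurrence is `z n = p z (n - 1)`, so `z (j - 1) ^ 2 = z j * z (j - 2) = 0`
    have hprev : z j = p * z (j - 1) := by simpa [hq] using hz j
    have hprev₁ : z (j - 1) = p * z (j - 1 - 1) := by simpa [hq] using hz (j - 1)
    exact pow_eq_zero_iff (n := 2) two_ne_zero |>.1 <| by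
      linear_combination z (j - 1) * hprev₁ - z (j - 1 - 1) * hprev + z (j - 1 - 1) * hj
  · exact h

theorem eq_zero_of_eq_zero_of_eq_zero (hz : z ∈ secondOrderSolSpace p q)
    (h₀ : z 0 = 0) (h₁ : z 1 = 0) : z = 0 := by
  suffices h : ∀ n : ℤ, z n = 0 ∧ z (n + 1) = 0 from funext fun n => (h n).1
  intro n
  induction n using Int.induction_on with
  | zero => simpa using ⟨h₀, h₁⟩
  | succ k ih =>
    refine ⟨ih.2, ?_⟩
    rw [hz, add_sub_cancel_right, show (k : ℤ) + 1 + 1 - 2 = k by ring, ih.1, ih.2]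
    ring
  | pred k ih =>
    refine ⟨eq_zero_of_succ_eq_zero hz ih.1 (by simpa using ih.2), ?_⟩
    simpa using ih.1

end CommRing

variable {K : Type*} [Field K] {p q : K}

theorem exists_ne_zero_sum_smul_eq_zero {f : Fin 3 → ℤ → K}
    (hf : ∀ j, f j ∈ secondOrderSolSpace p q) : ∃ c : Fin 3 → K, c ≠ 0 ∧ ∑ j, c j • f j = 0 := by
  have hdep : ¬LinearIndependent K (fun j => ![f j 0, f j 1]) := fun h => by
    simpa using h.fintype_card_le_finrank
  obtain ⟨c, hc, i, hi⟩ := Fintype.not_linearIndependent_iff.1 hdep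
  refine ⟨c, fun h => hi (by simp [h]), eq_zero_of_eq_zero_of_eq_zero
    (Submodule.sum_mem _ fun j _ => Submodule.smul_mem _ _ (hf j)) ?_ ?_⟩
  · simpa using congr_fun hc 0
  · simpa using congr_fun hc 1

theorem det_eq_zero {f : Fin 3 → ℤ → K} (hf : ∀ j, f j ∈ secondOrderSolSpace p q)
    (n : Fin 3 → ℤ) : (Matrix.of fun i j => f j (n i)).det = 0 := by
  obtain ⟨c, hc, hsum⟩ := exists_ne_zero_sum_smul_eq_zero hf
  refine Matrix.exists_mulVec_eq_zero_iff.1 ⟨c, hc, funext fun i => ?_⟩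
  simpa [Matrix.mulVec, dotProduct, mul_comm] using congr_fun hsum (n i)

end secondOrderSolSpace

open secondOrderSolSpace in
theorem stmt_2_general (X Y : ℤ → ℝ) (p q : ℝ)
    (hX : ∀ n : ℤ, X n = p * X (n - 1) + q * X (n - 2))
    (hY : ∀ n : ℤ, Y n = p * Y (n - 1) + q * Y (n - 2))
    (a b c d e m : ℤ) :
    (X (d - a) * Y (e - b) - X (e - a) * Y (d - b)) * X (m - c)
      = (X (d - c) * Y (e - b) - X (e - c) * Y (d - b)) * X (m - a)
        + (X (d - a) * X (e - c) - X (e - a) * X (d - c)) * Y (m - b) := by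
  have hX' : X ∈ secondOrderSolSpace p q := hX
  have hY' : Y ∈ secondOrderSolSpace p q := hY
  have hdet := det_eq_zero (p := p) (q := q)
    (f := ![fun n => X (n - a), fun n => Y (n - b), fun n => X (n - c)])
    (fun j => by fin_cases j; exacts [shift_mem hX' a, shift_mem hY' b, shift_mem hX' c]) ![d, e, m]
  rw [Matrix.det_fin_three] at hdet
  simp only [Matrix.of_apply, Matrix.cons_val_zero, Matrix.cons_val_one, Matrix.cons_val_two,
    Matrix.head_cons, Matrix.tail_cons] at hdet
  linear_combination hdet

/-- Lemma 1: two homogeneous second order recurrence sequences with the same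
recurrence relation. -/
theorem stmt_2 (X Y : ℤ → ℝ) (p q : ℝ)
    (hX : ∀ n : ℤ, X n = p * X (n - 1) + q * X (n - 2))
    (hY : ∀ n : ℤ, Y n = p * Y (n - 1) + q * Y (n - 2))
    (a b c d e m : ℤ)
    (hΔ : X (d - a) * Y (e - b) - X (e - a) * Y (d - b) ≠ 0) :
    (X (d - a) * Y (e - b) - X (e - a) * Y (d - b)) * X (m - c)
      = (X (d - c) * Y (e - b) - X (e - c) * Y (d - b)) * X (m - a)
        + (X (d - a) * X (e - c) - X (e - a) * X (d - c)) * Y (m - b) :=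
  stmt_2_general X Y p q hX hY a b c d e m
end

section
/- Let X : ℤ → ℝ be a homogeneous second order recurrence sequence with constant coefficients, i.e. there exist p, q ∈ ℝ such that X(n) = p·X(n−1) + q·X(n−2) for all n ∈ ℤ. Let a, b, c, d, e, m be integers and let k be a nonnegative integer such that Δ₁ = X(d−c)·X(e−b) − X(e−c)·X(d−b) ≠ 0 and Δ₂ = X(d−a)·X(e−c) − X(e−a)·X(d−c) ≠ 0. Then ∑_{r=0}^{k} C(k,r) · ((X(d−c)·X(e−b) − X(e−c)·X(d−b)) / (X(d−a)·X(e−c) − X(e−a)·X(d−c)))^r · X(m − (b−c)·k + (b−a)·r) = ((X(d−a)·X(e−b) − X(e−a)·X(d−b)) / (X(d−a)·X(e−c) − X(e−a)·X(d−c)))^k · X(m), where C(k,r) denotes the binomial coefficient. -/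
/-!
Fix `N ≤ n, d, e`. Every value `X (t - s)` with `t ≥ N` is a combination of `X (N - s)` and
`X (N - s + 1)` with coefficients depending on `t - N` only, so the `3 × 3` matrix
`(X (t - s))` with rows `t = n, d, e` and columns `s = a, b, c` has rank at most two. Expanding its
vanishing determinant along the first row gives a three-term relation
`Δ(a,b) X (n - c) = Δ(a,c) X (n - b) + Δ(c,b) X (n - a)` between the `2 × 2` minors. Dividing by
`Δ(a,c) = Δ₂` turns it into `s X n = X (n - u) + t X (n - u + v)`, and iterating such a relation
`k` times produces the binomial sum, exactly as in the binomial theorem.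
-/

namespace SecondOrderRecurrence

variable {R : Type*} [CommRing R]

variable (p q : R) in
def solution (x₀ x₁ : R) : ℕ → R
  | 0 => x₀
  | 1 => x₁
  | n + 2 => p * solution x₀ x₁ (n + 1) + q * solution x₀ x₁ n

variable {p q : R} {X : ℤ → R}

theorem eq_solution_one_zero_add_solution_zero_one
    (hX : ∀ n : ℤ, X n = p * X (n - 1) + q * X (n - 2)) (N : ℤ) :
    ∀ j : ℕ, X (N + j) = solution p q 1 0 j * X N + solution p q 0 1 j * X (N + 1)
  | 0 => by simp [solution]
  | 1 => by simp [solution]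
  | j + 2 => by
    have h := hX (N + (j + 2 : ℕ))
    rw [show N + (j + 2 : ℕ) - 1 = N + (j + 1 : ℕ) by push_cast; ring,
      show N + (j + 2 : ℕ) - 2 = N + j by push_cast; ring,
      eq_solution_one_zero_add_solution_zero_one hX N (j + 1),
      eq_solution_one_zero_add_solution_zero_one hX N j] at h
    rw [h, solution, solution]
    ring

theorem three_term_identity (hX : ∀ n : ℤ, X n = p * X (n - 1) + q * X (n - 2))
    (a b c d e n : ℤ) :
    (X (d - a) * X (e - b) - X (e - a) * X (d - b)) * X (n - c)
      = (X (d - a) * X (e - c) - X (e - a) * X (d - c)) * X (n - b)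
        + (X (d - c) * X (e - b) - X (e - c) * X (d - b)) * X (n - a) := by
  set N := min n (min d e)
  have hrow : ∀ t, N ≤ t → ∀ s : ℤ, X (t - s) =
      solution p q 1 0 (t - N).toNat * X (N - s)
        + solution p q 0 1 (t - N).toNat * X (N - s + 1) := by
    intro t ht s
    rw [← eq_solution_one_zero_add_solution_zero_one hX, Int.toNat_of_nonneg (by omega)]
    ring_nf
  simp only [hrow n (by omega), hrow d (by omega), hrow e (by omega)]
  ring

end SecondOrderRecurrence

theorem sum_choose_mul_pow_mul_of_eq_add_mul {R : Type*} [CommRing R] {X : ℤ → R}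
    {s t : R} {u v : ℤ} (h : ∀ n : ℤ, s * X n = X (n - u) + t * X (n - u + v))
    (k : ℕ) (m : ℤ) :
    ∑ r ∈ Finset.range (k + 1), (k.choose r : R) * t ^ r * X (m - u * k + v * r)
      = s ^ k * X m := by
  induction k generalizing m with
  | zero => simp
  | succ k ih =>
    have hsplit := Finset.sum_choose_succ_mul
      (fun r _ => t ^ r * X (m - u * (k + 1 : ℕ) + v * r)) k
    calc _ = ∑ r ∈ Finset.range (k + 1), (k.choose r : R) * t ^ r * X (m - u - u * k + v * r)
          + t * ∑ r ∈ Finset.range (k + 1),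
              (k.choose r : R) * t ^ r * X (m - u + v - u * k + v * r) := by
          simp_rw [mul_assoc, hsplit, Finset.mul_sum]
          congr 1 <;> refine Finset.sum_congr rfl fun r _ => ?_ <;> push_cast <;> ring_nf
      _ = s ^ (k + 1) * X m := by rw [ih, ih, pow_succ, mul_assoc, h m]; ring

theorem stmt_3_general (X : ℤ → ℝ) (p q : ℝ)
    (hX : ∀ n : ℤ, X n = p * X (n - 1) + q * X (n - 2))
    (a b c d e m : ℤ) (k : ℕ)
    (h2 : X (d - a) * X (e - c) - X (e - a) * X (d - c) ≠ 0) :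
    ∑ r ∈ Finset.range (k + 1),
      (k.choose r : ℝ) *
        ((X (d - c) * X (e - b) - X (e - c) * X (d - b)) /
            (X (d - a) * X (e - c) - X (e - a) * X (d - c))) ^ r *
        X (m - (b - c) * (k : ℤ) + (b - a) * (r : ℤ))
      = ((X (d - a) * X (e - b) - X (e - a) * X (d - b)) /
            (X (d - a) * X (e - c) - X (e - a) * X (d - c))) ^ k * X m := by
  refine sum_choose_mul_pow_mul_of_eq_add_mul (fun n => ?_) k m
  have h := SecondOrderRecurrence.three_term_identity hX a b c d e (n + c)
  rw [show n + c - c = n by ring, show n + c - b = n - (b - c) by ring,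
    show n + c - a = n - (b - c) + (b - a) by ring] at h
  field_simp
  linear_combination h

/-- Weighted binomial sum identity for a general homogeneous second order
linear recurrence sequence with constant coefficients. -/
theorem stmt_3 (X : ℤ → ℝ) (p q : ℝ)
    (hX : ∀ n : ℤ, X n = p * X (n - 1) + q * X (n - 2))
    (a b c d e m : ℤ) (k : ℕ)
    (h1 : X (d - c) * X (e - b) - X (e - c) * X (d - b) ≠ 0)
    (h2 : X (d - a) * X (e - c) - X (e - a) * X (d - c) ≠ 0) :
    ∑ r ∈ Finset.range (k + 1),
      (k.choose r : ℝ) *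
        ((X (d - c) * X (e - b) - X (e - c) * X (d - b)) /
            (X (d - a) * X (e - c) - X (e - a) * X (d - c))) ^ r *
        X (m - (b - c) * (k : ℤ) + (b - a) * (r : ℤ))
      = ((X (d - a) * X (e - b) - X (e - a) * X (d - b)) /
            (X (d - a) * X (e - c) - X (e - a) * X (d - c))) ^ k * X m :=
  stmt_3_general X p q hX a b c d e m k h2
end

section
/- For all integers a, b, c, d, e, m: (F(d−a)·L(e−b) − F(e−a)·L(d−b))·F(m−c) = (F(d−c)·L(e−b) − F(e−c)·L(d−b))·F(m−a) + (F(d−a)·F(e−c) − F(e−a)·F(d−c))·L(m−b). -/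
/-!
Every solution `G` of the Fibonacci recurrence on `ℤ` is determined by two consecutive values, so
`G (x - t) = G (-t) * F (x - 1) + G (1 - t) * F x`. Expanding all nine factors of the identity this
way turns both sides into polynomials in `F (x - 1)` and `F x` for `x ∈ {d, e, m}`, which agree.
-/

variable {R : Type*} [CommRing R]

def IsFibRec (G : ℤ → R) : Prop :=
  ∀ n : ℤ, G n = G (n - 1) + G (n - 2)

namespace IsFibRec

variable {G : ℤ → R}

theorem add_two (hG : IsFibRec G) (n : ℤ) : G (n + 2) = G (n + 1) + G n := by
  have h := hG (n + 2)
  rwa [show n + 2 - 1 = n + 1 by ring, add_sub_cancel_right] at h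

theorem comp_sub (hG : IsFibRec G) (t : ℤ) : IsFibRec fun n => G (n - t) := fun n => by
  simpa only [sub_right_comm] using hG (n - t)

theorem eq_zero_of_eq_zero (hG : IsFibRec G) (h0 : G 0 = 0) (h1 : G 1 = 0) (n : ℤ) :
    G n = 0 := by
  suffices ∀ n : ℤ, G n = 0 ∧ G (n + 1) = 0 from (this n).1
  intro n
  induction n using Int.induction_on with
  | zero => exact ⟨h0, h1⟩
  | succ k ih =>
    refine ⟨ih.2, ?_⟩
    rw [add_assoc, one_add_one_eq_two, hG.add_two, ih.1, ih.2, add_zero]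
  | pred k ih =>
    have h := hG.add_two (-k - 1)
    rw [show -(k : ℤ) - 1 + 2 = -k + 1 by ring, sub_add_cancel, ih.1, ih.2] at h
    exact ⟨by linear_combination -h, by rw [sub_add_cancel, ih.1]⟩

variable {F : ℤ → R}

theorem eq_fib_combination (hG : IsFibRec G) (hF : IsFibRec F) (hF0 : F 0 = 0) (hF1 : F 1 = 1)
    (x : ℤ) : G x = G 0 * F (x - 1) + G 1 * F x := by
  have hFneg : F (-1) = 1 := by
    have h := hF.add_two (-1)
    norm_num [hF0, hF1] at h
    linear_combination -h
  let H : ℤ → R := fun n => G n - (G 0 * F (n - 1) + G 1 * F n)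
  have hH : IsFibRec H := fun n => by
    have hF' := hF (n - 1)
    rw [show n - 1 - 2 = n - 2 - 1 by ring] at hF'
    linear_combination hG n - G 0 * hF' - G 1 * hF n
  exact sub_eq_zero.mp <|
    hH.eq_zero_of_eq_zero (by simp [H, hFneg, hF0]) (by simp [H, hF0, hF1]) x

theorem apply_sub_eq (hG : IsFibRec G) (hF : IsFibRec F) (hF0 : F 0 = 0) (hF1 : F 1 = 1)
    (t x : ℤ) : G (x - t) = G (-t) * F (x - 1) + G (1 - t) * F x := by
  simpa using (hG.comp_sub t).eq_fib_combination hF hF0 hF1 x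

end IsFibRec

theorem stmt_4_general (F L : ℤ → ℤ)
    (hF0 : F 0 = 0) (hF1 : F 1 = 1)
    (hF : ∀ n : ℤ, F n = F (n - 1) + F (n - 2))
    (hL : ∀ n : ℤ, L n = L (n - 1) + L (n - 2))
    (a b c d e m : ℤ) :
    (F (d - a) * L (e - b) - F (e - a) * L (d - b)) * F (m - c)
      = (F (d - c) * L (e - b) - F (e - c) * L (d - b)) * F (m - a)
        + (F (d - a) * F (e - c) - F (e - a) * F (d - c)) * L (m - b) := by
  have expandF := IsFibRec.apply_sub_eq hF hF hF0 hF1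
  have expandL := IsFibRec.apply_sub_eq hL hF hF0 hF1
  rw [expandF a d, expandF a e, expandF a m, expandF c d, expandF c e, expandF c m,
    expandL b d, expandL b e, expandL b m]
  ring

/-- Identity for Fibonacci and Lucas numbers extended to all integers. -/
theorem stmt_4 (F L : ℤ → ℤ)
    (hF0 : F 0 = 0) (hF1 : F 1 = 1)
    (hF : ∀ n : ℤ, F n = F (n - 1) + F (n - 2))
    (hL0 : L 0 = 2) (hL1 : L 1 = 1)
    (hL : ∀ n : ℤ, L n = L (n - 1) + L (n - 2))
    (a b c d e m : ℤ) :
    (F (d - a) * L (e - b) - F (e - a) * L (d - b)) * F (m - c)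
      = (F (d - c) * L (e - b) - F (e - c) * L (d - b)) * F (m - a)
        + (F (d - a) * F (e - c) - F (e - a) * F (d - c)) * L (m - b) :=
  stmt_4_general F L hF0 hF1 hF hL a b c d e m
end

section
/- For all integers a, b, c, d, e, m: (J(d−a)·j(e−b) − J(e−a)·j(d−b))·J(m−c) = (J(d−c)·j(e−b) − J(e−c)·j(d−b))·J(m−a) + (J(d−a)·J(e−c) − J(e−a)·J(d−c))·j(m−b). -/
/-!
Both sequences satisfy a recurrence with characteristic roots `2` and `-1`, so by uniqueness of
two-sided solutions they have Binet forms `J n = (2 ^ n - (-1) ^ n) / 3` and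
`j n = 2 ^ n + (-1) ^ n`. Substituting these, the identity becomes a polynomial identity in
`2 ^ x` and `(-1) ^ x` for `x ∈ {a, b, c, d, e, m}` and their inverses.
-/

section LinearRecurrence

variable {K : Type*} [Field K] {p q : K}

/-- Since `q ≠ 0`, the recurrence can also be run backwards, so two consecutive zeros force
the whole two-sided sequence to vanish. -/
theorem eq_zero_of_linearRec {h : ℤ → K} (hq : q ≠ 0)
    (hrec : ∀ n : ℤ, h n = p * h (n - 1) + q * h (n - 2)) (h0 : h 0 = 0) (h1 : h 1 = 0) :
    ∀ n : ℤ, h n = 0 := by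
  suffices hpair : ∀ n : ℤ, h n = 0 ∧ h (n + 1) = 0 from fun n => (hpair n).1
  intro n
  induction n using Int.induction_on with
  | zero => exact ⟨h0, by simpa using h1⟩
  | succ k ih =>
    refine ⟨ih.2, ?_⟩
    rw [hrec, show (k : ℤ) + 1 + 1 - 1 = k + 1 by ring, show (k : ℤ) + 1 + 1 - 2 = k by ring,
      ih.1, ih.2]
    ring
  | pred k ih =>
    have hnext := hrec (-k + 1)
    rw [show -(k : ℤ) + 1 - 1 = -k by ring, show -(k : ℤ) + 1 - 2 = -k - 1 by ring,
      ih.1, ih.2, mul_zero, zero_add, zero_eq_mul] at hnext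
    exact ⟨hnext.resolve_left hq, by simpa using ih.1⟩

theorem linearRec_ext {f g : ℤ → K} (hq : q ≠ 0)
    (hf : ∀ n : ℤ, f n = p * f (n - 1) + q * f (n - 2))
    (hg : ∀ n : ℤ, g n = p * g (n - 1) + q * g (n - 2)) (h0 : f 0 = g 0) (h1 : f 1 = g 1) :
    f = g := by
  have hdiff : ∀ n : ℤ, f n - g n = p * (f (n - 1) - g (n - 1)) + q * (f (n - 2) - g (n - 2)) :=
    fun n => by rw [hf, hg]; ring
  funext n
  exact sub_eq_zero.mp (eq_zero_of_linearRec hq hdiff (sub_eq_zero.mpr h0) (sub_eq_zero.mpr h1) n)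

theorem zpow_linearRec {r : K} (hr : r ≠ 0) (hchar : r ^ 2 = p * r + q) (n : ℤ) :
    r ^ n = p * r ^ (n - 1) + q * r ^ (n - 2) := by
  have hshift : r ^ n = r ^ (n - 2) * r ^ 2 := by
    rw [← zpow_natCast, ← zpow_add₀ hr]
    norm_num
  rw [hshift, hchar, show n - 1 = n - 2 + 1 by ring, zpow_add_one₀ hr]
  ring

end LinearRecurrence

theorem jacobsthalRec_binet {K : Type*} [Field K] [CharZero K] (f : ℤ → K)
    (hf : ∀ n : ℤ, f n = f (n - 1) + 2 * f (n - 2)) (n : ℤ) :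
    f n = ((f 0 + f 1) * 2 ^ n + (2 * f 0 - f 1) * (-1) ^ n) / 3 := by
  have hrec : ∀ n : ℤ, f n = 1 * f (n - 1) + 2 * f (n - 2) := by simpa using hf
  refine congrFun (linearRec_ext
    (g := fun n => ((f 0 + f 1) * 2 ^ n + (2 * f 0 - f 1) * (-1) ^ n) / 3)
    two_ne_zero hrec (fun n => ?_) ?_ ?_) n
  · rw [zpow_linearRec (p := 1) (q := 2) two_ne_zero (by norm_num) n,
      zpow_linearRec (p := 1) (q := 2) (by norm_num : (-1 : K) ≠ 0) (by norm_num) n]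
    ring
  · field_simp
    ring
  · field_simp
    ring

/-- Identity for Jacobsthal and Jacobsthal–Lucas numbers extended to all
integers. -/
theorem stmt_5 (J j : ℤ → ℚ)
    (hJ0 : J 0 = 0) (hJ1 : J 1 = 1)
    (hJ : ∀ n : ℤ, J n = J (n - 1) + 2 * J (n - 2))
    (hj0 : j 0 = 2) (hj1 : j 1 = 1)
    (hj : ∀ n : ℤ, j n = j (n - 1) + 2 * j (n - 2))
    (a b c d e m : ℤ) :
    (J (d - a) * j (e - b) - J (e - a) * j (d - b)) * J (m - c)
      = (J (d - c) * j (e - b) - J (e - c) * j (d - b)) * J (m - a)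
        + (J (d - a) * J (e - c) - J (e - a) * J (d - c)) * j (m - b) := by
  have hJbinet : ∀ n : ℤ, J n = (2 ^ n - (-1) ^ n) / 3 := fun n => by
    rw [jacobsthalRec_binet J hJ n, hJ0, hJ1]
    ring
  have hjbinet : ∀ n : ℤ, j n = 2 ^ n + (-1) ^ n := fun n => by
    rw [jacobsthalRec_binet j hj n, hj0, hj1]
    ring
  simp only [hJbinet, hjbinet, zpow_sub₀ (two_ne_zero : (2 : ℚ) ≠ 0),
    zpow_sub₀ (by norm_num : (-1 : ℚ) ≠ 0)]
  have h2pow : ∀ x : ℤ, (2 : ℚ) ^ x ≠ 0 := fun x => zpow_ne_zero x two_ne_zero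
  have hneg1pow : ∀ x : ℤ, (-1 : ℚ) ^ x ≠ 0 := fun x => zpow_ne_zero x (by norm_num)
  field_simp
  ring
end

section
/- For all integers a, b, c, d, e, m: (P(d−a)·Q(e−b) − P(e−a)·Q(d−b))·P(m−c) = (P(d−c)·Q(e−b) − P(e−c)·Q(d−b))·P(m−a) + (P(d−a)·P(e−c) − P(e−a)·P(d−c))·Q(m−b). -/
/-!
Each of `n ↦ P (n - a)`, `n ↦ P (n - c)`, `n ↦ Q (n - b)` solves the Pell recurrence, whose
solution space is two-dimensional, so the determinant of these three sequences sampled at `d`, `e`,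
`m` vanishes; the identity is the expansion of that determinant. Concretely, the determinant
solves the recurrence in each row variable and vanishes when two rows coincide; a solution
vanishing at two consecutive integers vanishes identically, so the determinant vanishes first for
`e = d + 1` and then for all `e`.
-/

variable {R : Type*} [CommRing R]

def SolvesRec (p q : R) (f : ℤ → R) : Prop :=
  ∀ n, f n = p * f (n - 1) + q * f (n - 2)

def det3_s6 (x y z : ℤ → R) (d e m : ℤ) : R :=
  Matrix.det !![x d, y d, z d; x e, y e, z e; x m, y m, z m]

theorem det3_eq (x y z : ℤ → R) (d e m : ℤ) : det3_s6 x y z d e m =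
    x d * (y e * z m - z e * y m) - y d * (x e * z m - z e * x m)
      + z d * (x e * y m - y e * x m) := by
  rw [det3_s6, Matrix.det_fin_three]
  simp only [Fin.isValue, Matrix.of_apply, Matrix.cons_val', Matrix.cons_val_zero,
    Matrix.cons_val_fin_one, Matrix.cons_val_one, Matrix.cons_val]
  ring

theorem det3_swap (x y z : ℤ → R) (d e m : ℤ) : det3_s6 x y z d e m = -det3_s6 x y z d m e := by
  rw [det3_eq, det3_eq]
  ring

namespace SolvesRec

variable {p q : R} {x y z : ℤ → R}

theorem comp_sub_const (hx : SolvesRec p q x) (a : ℤ) : SolvesRec p q (fun n => x (n - a)) :=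
  fun n => by convert hx (n - a) using 3 <;> ring_nf

theorem mul_add_mul_add_mul (hx : SolvesRec p q x) (hy : SolvesRec p q y)
    (hz : SolvesRec p q z) (A B C : R) : SolvesRec p q (fun n => A * x n + B * y n + C * z n) :=
  fun n => by dsimp only; rw [hx n, hy n, hz n]; ring

theorem eq_zero_of_consecutive_eq_zero (hq : IsUnit q) (hx : SolvesRec p q x) (k : ℤ)
    (h₀ : x k = 0) (h₁ : x (k + 1) = 0) (n : ℤ) : x n = 0 := by
  suffices x n = 0 ∧ x (n + 1) = 0 from this.1
  induction n using Int.inductionOn' (b := k) with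
  | zero => exact ⟨h₀, h₁⟩
  | succ n _ ih =>
    refine ⟨ih.2, ?_⟩
    rw [hx, show n + 1 + 1 - 1 = n + 1 by ring, show n + 1 + 1 - 2 = n by ring, ih.1, ih.2]
    ring
  | pred n _ ih =>
    refine ⟨?_, by rw [sub_add_cancel]; exact ih.1⟩
    have h := hx (n + 1)
    rw [ih.2, show n + 1 - 1 = n by ring, show n + 1 - 2 = n - 1 by ring, ih.1,
      mul_zero, zero_add, eq_comm, hq.mul_right_eq_zero] at h
    exact h

theorem det3_last (hx : SolvesRec p q x) (hy : SolvesRec p q y) (hz : SolvesRec p q z) (d e : ℤ) :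
    SolvesRec p q (det3_s6 x y z d e) := by
  convert hx.mul_add_mul_add_mul hy hz (y d * z e - z d * y e) (z d * x e - x d * z e)
    (x d * y e - y d * x e) using 2 with m
  rw [det3_eq]
  ring

theorem det3_eq_zero (hq : IsUnit q) (hx : SolvesRec p q x) (hy : SolvesRec p q y)
    (hz : SolvesRec p q z) (d e m : ℤ) : det3_s6 x y z d e m = 0 := by
  have consecutive : ∀ m, det3_s6 x y z d (d + 1) m = 0 :=
    (hx.det3_last hy hz d (d + 1)).eq_zero_of_consecutive_eq_zero hq d
      (Matrix.det_zero_of_row_eq (i := 0) (j := 2) (by decide) rfl)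
      (Matrix.det_zero_of_row_eq (i := 1) (j := 2) (by decide) rfl)
  rw [det3_swap, neg_eq_zero]
  exact (hx.det3_last hy hz d m).eq_zero_of_consecutive_eq_zero hq d
    (Matrix.det_zero_of_row_eq (i := 0) (j := 2) (by decide) rfl)
    (by rw [← neg_eq_zero, ← det3_swap]; exact consecutive m) e

end SolvesRec

theorem stmt_6_general (P Q : ℤ → ℤ)
    (hP : ∀ n : ℤ, P n = 2 * P (n - 1) + P (n - 2))
    (hQ : ∀ n : ℤ, Q n = 2 * Q (n - 1) + Q (n - 2))
    (a b c d e m : ℤ) :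
    (P (d - a) * Q (e - b) - P (e - a) * Q (d - b)) * P (m - c)
      = (P (d - c) * Q (e - b) - P (e - c) * Q (d - b)) * P (m - a)
        + (P (d - a) * P (e - c) - P (e - a) * P (d - c)) * Q (m - b) := by
  have hP' : SolvesRec 2 1 P := fun n => by rw [one_mul]; exact hP n
  have hQ' : SolvesRec 2 1 Q := fun n => by rw [one_mul]; exact hQ n
  have h := SolvesRec.det3_eq_zero isUnit_one (hP'.comp_sub_const a) (hP'.comp_sub_const c)
    (hQ'.comp_sub_const b) d e m
  rw [det3_eq] at h
  linear_combination -h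

/-- Identity for Pell and Pell–Lucas numbers extended to all integers. -/
theorem stmt_6 (P Q : ℤ → ℤ)
    (hP0 : P 0 = 0) (hP1 : P 1 = 1)
    (hP : ∀ n : ℤ, P n = 2 * P (n - 1) + P (n - 2))
    (hQ0 : Q 0 = 2) (hQ1 : Q 1 = 1)
    (hQ : ∀ n : ℤ, Q n = 2 * Q (n - 1) + Q (n - 2))
    (a b c d e m : ℤ) :
    (P (d - a) * Q (e - b) - P (e - a) * Q (d - b)) * P (m - c)
      = (P (d - c) * Q (e - b) - P (e - c) * Q (d - b)) * P (m - a)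
        + (P (d - a) * P (e - c) - P (e - a) * P (d - c)) * Q (m - b) :=
  stmt_6_general P Q hP hQ a b c d e m
end

section
/- For all integers a, b, c, d, e: (F(d−c)·L(e−b) − F(e−c)·L(d−b))·F(c−a) = (F(e−a)·F(d−c) − F(d−a)·F(e−c))·L(c−b). -/
/-!
Every sequence `u` satisfying the Fibonacci recurrence obeys the addition formula
`u (m + k) = F k * u (m + 1) + F (k - 1) * u m`, since both sides satisfy the recurrence in `k`
and agree at `k = 0, 1`. Expanding `L (e - b)`, `L (d - b)` around `c - b` and `F (e - a)`,
`F (d - a)` around `c - a` turns both sides of the identity into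
`(F (d - c) * F (e - c - 1) - F (e - c) * F (d - c - 1)) * F (c - a) * L (c - b)`.
-/

def FibLike {M : Type*} [AddCommGroup M] (u : ℤ → M) : Prop :=
  ∀ n : ℤ, u n = u (n - 1) + u (n - 2)

namespace FibLike

section AddCommGroup

variable {M : Type*} [AddCommGroup M] {u v : ℤ → M}

theorem add_two (hu : FibLike u) (n : ℤ) : u (n + 2) = u (n + 1) + u n := by
  simpa [add_sub_assoc] using hu (n + 2)

theorem sub_one (hu : FibLike u) (n : ℤ) : u (n - 1) = u (n + 1) - u n := by
  have h := hu.add_two (n - 1)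
  rw [sub_add_cancel, show n - 1 + 2 = n + 1 by ring] at h
  rw [h, add_sub_cancel_left]

theorem add (hu : FibLike u) (hv : FibLike v) : FibLike (fun n => u n + v n) := fun n => by
  dsimp only; rw [hu n, hv n]; abel

theorem comp_add_const (hu : FibLike u) (m : ℤ) : FibLike (fun n => u (m + n)) := fun n => by
  simpa only [add_sub_assoc] using hu (m + n)

theorem ext (hu : FibLike u) (hv : FibLike v) {m : ℤ}
    (h₀ : u m = v m) (h₁ : u (m + 1) = v (m + 1)) : u = v := by
  suffices h : ∀ k : ℤ, u (m + k) = v (m + k) ∧ u (m + k + 1) = v (m + k + 1) by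
    funext n
    simpa using (h (n - m)).1
  intro k
  induction k using Int.induction_on with
  | zero => simpa using ⟨h₀, h₁⟩
  | succ k ih =>
    rw [← add_assoc, add_assoc _ 1, one_add_one_eq_two]
    exact ⟨ih.2, by rw [hu.add_two, hv.add_two, ih.1, ih.2]⟩
  | pred k ih =>
    rw [← add_sub_assoc, sub_add_cancel]
    exact ⟨by rw [hu.sub_one, hv.sub_one, ih.1, ih.2], ih.1⟩

end AddCommGroup

section Ring

variable {R : Type*} [Ring R] {F u : ℤ → R}

theorem mul_const (hF : FibLike F) (x : R) : FibLike (fun n => F n * x) := fun n => by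
  dsimp only; rw [hF n, add_mul]

theorem apply_add (hu : FibLike u) (hF : FibLike F) (hF0 : F 0 = 0) (hF1 : F 1 = 1) (m k : ℤ) :
    u (m + k) = F k * u (m + 1) + F (k - 1) * u m := by
  have hFm1 : F (-1) = 1 := by simpa [hF0, hF1] using (hF 1).symm
  have hshift : FibLike (fun k => F (k - 1)) := by
    simpa only [add_comm (-1 : ℤ), ← sub_eq_add_neg] using hF.comp_add_const (-1)
  refine congrFun ((hu.comp_add_const m).ext
    ((hF.mul_const _).add (hshift.mul_const _)) (m := 0) ?_ ?_) k <;> simp [hF0, hF1, hFm1]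

end Ring

end FibLike

theorem stmt_7_general (F L : ℤ → ℤ)
    (hF0 : F 0 = 0) (hF1 : F 1 = 1)
    (hF : ∀ n : ℤ, F n = F (n - 1) + F (n - 2))
    (hL : ∀ n : ℤ, L n = L (n - 1) + L (n - 2))
    (a b c d e : ℤ) :
    (F (d - c) * L (e - b) - F (e - c) * L (d - b)) * F (c - a)
      = (F (e - a) * F (d - c) - F (d - a) * F (e - c)) * L (c - b) := by
  have hL_add := FibLike.apply_add hL hF hF0 hF1 (c - b)
  have hF_add := FibLike.apply_add hF hF hF0 hF1 (c - a)
  rw [show e - b = c - b + (e - c) by ring, show d - b = c - b + (d - c) by ring,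
    show e - a = c - a + (e - c) by ring, show d - a = c - a + (d - c) by ring,
    hL_add (e - c), hL_add (d - c), hF_add (e - c), hF_add (d - c)]
  ring

/-- Corollary identity for Fibonacci and Lucas numbers. -/
theorem stmt_7 (F L : ℤ → ℤ)
    (hF0 : F 0 = 0) (hF1 : F 1 = 1)
    (hF : ∀ n : ℤ, F n = F (n - 1) + F (n - 2))
    (hL0 : L 0 = 2) (hL1 : L 1 = 1)
    (hL : ∀ n : ℤ, L n = L (n - 1) + L (n - 2))
    (a b c d e : ℤ) :
    (F (d - c) * L (e - b) - F (e - c) * L (d - b)) * F (c - a)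
      = (F (e - a) * F (d - c) - F (d - a) * F (e - c)) * L (c - b) :=
  stmt_7_general F L hF0 hF1 hF hL a b c d e
end

section
/- For all integers a, b, c, d, e: (J(d−c)·j(e−b) − J(e−c)·j(d−b))·J(c−a) = (J(e−a)·J(d−c) − J(d−a)·J(e−c))·j(c−b). -/
/-! Both sequences are Lucas sequences with roots `2` and `-1`: `J n = (2 ^ n - (-1) ^ n) / 3` and
`j n = 2 ^ n + (-1) ^ n`. For Lucas sequences `U`, `V` with roots `α`, `β`, Binet's formula gives
`U p * V (q + r) - U q * V (p + r) = (α β) ^ q U (p - q) V r` and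
`U (q + s) * U p - U (p + s) * U q = (α β) ^ q U (p - q) U s`; with `p = d - c`, `q = e - c`,
`r = c - b`, `s = c - a` both sides of the identity equal `(α β) ^ q U (p - q) V r U s`. -/

theorem Int.eq_zero_of_linearRecurrence {R : Type*} [CommRing R] [NoZeroDivisors R]
    {P Q : R} (hQ : Q ≠ 0) {h : ℤ → R} (h0 : h 0 = 0) (h1 : h 1 = 0)
    (hrec : ∀ n, h n = P * h (n - 1) - Q * h (n - 2)) (n : ℤ) : h n = 0 := by
  suffices key : ∀ n : ℤ, h n = 0 ∧ h (n + 1) = 0 from (key n).1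
  intro n
  induction n using Int.induction_on with
  | zero => exact ⟨h0, by simpa using h1⟩
  | succ k ih =>
    refine ⟨ih.2, ?_⟩
    rw [hrec, add_sub_cancel_right, show (k : ℤ) + 1 + 1 - 2 = k by ring, ih.1, ih.2]
    ring
  | pred k ih =>
    have hstep := hrec (-k + 1)
    rw [add_sub_cancel_right, ih.1, ih.2, show -(k : ℤ) + 1 - 2 = -k - 1 by ring] at hstep
    refine ⟨?_, by simpa using ih.1⟩
    simpa [hQ] using hstep.symm

theorem Int.eq_of_linearRecurrence {R : Type*} [CommRing R] [NoZeroDivisors R]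
    {P Q : R} (hQ : Q ≠ 0) {f g : ℤ → R} (h0 : f 0 = g 0) (h1 : f 1 = g 1)
    (hf : ∀ n, f n = P * f (n - 1) - Q * f (n - 2))
    (hg : ∀ n, g n = P * g (n - 1) - Q * g (n - 2)) : f = g := by
  funext n
  refine sub_eq_zero.mp (Int.eq_zero_of_linearRecurrence (P := P) hQ (h := f - g) ?_ ?_ (fun n => ?_) n)
  · simp [h0]
  · simp [h1]
  · simp only [Pi.sub_apply]
    rw [hf n, hg n]
    ring

section LucasSequence

variable {K : Type*} [Field K] (α β : K)

def lucasU (n : ℤ) : K := (α ^ n - β ^ n) / (α - β)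

def lucasV (n : ℤ) : K := α ^ n + β ^ n

variable {α β}

theorem lucasU_recurrence (hα : α ≠ 0) (hβ : β ≠ 0) (n : ℤ) :
    lucasU α β n = (α + β) * lucasU α β (n - 1) - α * β * lucasU α β (n - 2) := by
  simp only [lucasU, zpow_sub₀ hα, zpow_sub₀ hβ]
  field_simp
  ring

theorem lucasV_recurrence (hα : α ≠ 0) (hβ : β ≠ 0) (n : ℤ) :
    lucasV α β n = (α + β) * lucasV α β (n - 1) - α * β * lucasV α β (n - 2) := by
  simp only [lucasV, zpow_sub₀ hα, zpow_sub₀ hβ]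
  field_simp
  ring

theorem lucasU_mul_lucasV_add_sub (hα : α ≠ 0) (hβ : β ≠ 0) (p q r : ℤ) :
    lucasU α β p * lucasV α β (q + r) - lucasU α β q * lucasV α β (p + r)
      = (α * β) ^ q * lucasU α β (p - q) * lucasV α β r := by
  simp only [lucasU, lucasV, zpow_add₀ hα, zpow_add₀ hβ, zpow_sub₀ hα, zpow_sub₀ hβ, mul_zpow]
  field_simp
  ring

theorem lucasU_add_mul_lucasU_sub (hα : α ≠ 0) (hβ : β ≠ 0) (p q s : ℤ) :
    lucasU α β (q + s) * lucasU α β p - lucasU α β (p + s) * lucasU α β q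
      = (α * β) ^ q * lucasU α β (p - q) * lucasU α β s := by
  simp only [lucasU, zpow_add₀ hα, zpow_add₀ hβ, zpow_sub₀ hα, zpow_sub₀ hβ, mul_zpow]
  field_simp
  ring

end LucasSequence

/-- Corollary identity for Jacobsthal and Jacobsthal–Lucas numbers. -/
theorem stmt_8 (J j : ℤ → ℚ)
    (hJ0 : J 0 = 0) (hJ1 : J 1 = 1)
    (hJ : ∀ n : ℤ, J n = J (n - 1) + 2 * J (n - 2))
    (hj0 : j 0 = 2) (hj1 : j 1 = 1)
    (hj : ∀ n : ℤ, j n = j (n - 1) + 2 * j (n - 2))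
    (a b c d e : ℤ) :
    (J (d - c) * j (e - b) - J (e - c) * j (d - b)) * J (c - a)
      = (J (e - a) * J (d - c) - J (d - a) * J (e - c)) * j (c - b) := by
  have h2 : (2 : ℚ) ≠ 0 := two_ne_zero
  have hm1 : (-1 : ℚ) ≠ 0 := by norm_num
  have hQ : (2 : ℚ) * -1 ≠ 0 := by norm_num
  obtain rfl : J = lucasU 2 (-1) :=
    Int.eq_of_linearRecurrence hQ (by simp [hJ0, lucasU]) (by norm_num [hJ1, lucasU])
      (fun n => by rw [hJ n]; ring) (lucasU_recurrence h2 hm1)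
  obtain rfl : j = lucasV 2 (-1) :=
    Int.eq_of_linearRecurrence hQ (by norm_num [hj0, lucasV]) (by norm_num [hj1, lucasV])
      (fun n => by rw [hj n]; ring) (lucasV_recurrence h2 hm1)
  rw [show e - b = (e - c) + (c - b) by ring, show d - b = (d - c) + (c - b) by ring,
    show e - a = (e - c) + (c - a) by ring, show d - a = (d - c) + (c - a) by ring,
    lucasU_mul_lucasV_add_sub h2 hm1, lucasU_add_mul_lucasU_sub h2 hm1]
  ring
end

section
/- For all integers a, b, c, d, e: (P(d−c)·Q(e−b) − P(e−c)·Q(d−b))·P(c−a) = (P(e−a)·P(d−c) − P(d−a)·P(e−c))·Q(c−b). -/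
/-!
Let `U` be the solution of `x n = p * x (n - 1) + q * x (n - 2)` with `U 0 = 0`, `U 1 = 1`.
Every solution `G` of the same recurrence satisfies the addition formula
`G (m + n) = U m * G (n + 1) + q * U (m - 1) * G n`, so in the cross difference
`U u * G (v + x) - U v * G (u + x)` the terms in `G (x + 1)` cancel and what is left is
`q * (U u * U (v - 1) - U v * U (u - 1)) * G x`, with a coefficient independent of `G` and `x`.
Taking `u = d - c`, `v = e - c`, once with `G = Q`, `x = c - b` and once with `G = P`, `x = c - a`,
both sides of the identity become that coefficient times `P (c - a) * Q (c - b)`.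
-/

def IsLinRec2 {R : Type*} [CommRing R] (p q : R) (f : ℤ → R) : Prop :=
  ∀ n : ℤ, f n = p * f (n - 1) + q * f (n - 2)

namespace IsLinRec2

variable {R : Type*} [CommRing R] {p q : R} {f g U G : ℤ → R}

theorem ext (hq : IsUnit q) (hf : IsLinRec2 p q f) (hg : IsLinRec2 p q g) (h0 : f 0 = g 0)
    (h1 : f 1 = g 1) : f = g := by
  suffices h : ∀ n : ℤ, f n = g n ∧ f (n + 1) = g (n + 1) from funext fun n => (h n).1
  intro n
  induction n using Int.induction_on with
  | zero => exact ⟨h0, by simpa using h1⟩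
  | succ k ih =>
    refine ⟨ih.2, ?_⟩
    have hfk := hf (k + 1 + 1)
    have hgk := hg (k + 1 + 1)
    simp only [add_sub_cancel_right, show (k : ℤ) + 1 + 1 - 2 = k by ring] at hfk hgk
    rw [hfk, hgk, ih.1, ih.2]
  | pred k ih =>
    have hfk := hf (-k + 1)
    have hgk := hg (-k + 1)
    simp only [add_sub_cancel_right, show -(k : ℤ) + 1 - 2 = -k - 1 by ring] at hfk hgk
    refine ⟨hq.mul_left_cancel ?_, by simpa using ih.1⟩
    linear_combination ih.2 - hfk + hgk - p * ih.1

theorem add_eq (hU : IsLinRec2 p q U) (hU0 : U 0 = 0) (hU1 : U 1 = 1) (hG : IsLinRec2 p q G)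
    (m n : ℤ) : G (m + n) = U m * G (n + 1) + q * U (m - 1) * G n := by
  have hqU : q * U (-1) = 1 := by simpa [hU0, hU1] using (hU 1).symm
  suffices h : (fun m => G (m + n)) = fun m => U m * G (n + 1) + q * U (m - 1) * G n from
    congrFun h m
  refine ext (p := p) (.of_mul_eq_one _ hqU) (fun k => ?_) (fun k => ?_) ?_ ?_
  · simpa only [sub_add_eq_add_sub] using hG (k + n)
  · rw [sub_right_comm k 2 1]
    linear_combination G (n + 1) * hU k + q * G n * hU (k - 1)
  · simp only [zero_add, zero_sub]
    linear_combination (-G n) * hqU - G (n + 1) * hU0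
  · simp [hU0, hU1, add_comm]

theorem mul_add_sub_mul_add (hU : IsLinRec2 p q U) (hU0 : U 0 = 0) (hU1 : U 1 = 1)
    (hG : IsLinRec2 p q G) (u v x : ℤ) :
    U u * G (v + x) - U v * G (u + x) = q * (U u * U (v - 1) - U v * U (u - 1)) * G x := by
  rw [add_eq hU hU0 hU1 hG v, add_eq hU hU0 hU1 hG u]
  ring

end IsLinRec2

theorem stmt_9_general (P Q : ℤ → ℤ)
    (hP0 : P 0 = 0) (hP1 : P 1 = 1)
    (hP : ∀ n : ℤ, P n = 2 * P (n - 1) + P (n - 2))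
    (hQ : ∀ n : ℤ, Q n = 2 * Q (n - 1) + Q (n - 2))
    (a b c d e : ℤ) :
    (P (d - c) * Q (e - b) - P (e - c) * Q (d - b)) * P (c - a)
      = (P (e - a) * P (d - c) - P (d - a) * P (e - c)) * Q (c - b) := by
  have hP' : IsLinRec2 2 1 P := fun n => by rw [one_mul]; exact hP n
  have hQ' : IsLinRec2 2 1 Q := fun n => by rw [one_mul]; exact hQ n
  have hQcross := hP'.mul_add_sub_mul_add hP0 hP1 hQ' (d - c) (e - c) (c - b)
  have hPcross := hP'.mul_add_sub_mul_add hP0 hP1 hP' (d - c) (e - c) (c - a)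
  simp only [sub_add_sub_cancel] at hQcross hPcross
  linear_combination P (c - a) * hQcross - Q (c - b) * hPcross

/-- Corollary identity for Pell and Pell–Lucas numbers. -/
theorem stmt_9 (P Q : ℤ → ℤ)
    (hP0 : P 0 = 0) (hP1 : P 1 = 1)
    (hP : ∀ n : ℤ, P n = 2 * P (n - 1) + P (n - 2))
    (hQ0 : Q 0 = 2) (hQ1 : Q 1 = 1)
    (hQ : ∀ n : ℤ, Q n = 2 * Q (n - 1) + Q (n - 2))
    (a b c d e : ℤ) :
    (P (d - c) * Q (e - b) - P (e - c) * Q (d - b)) * P (c - a)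
      = (P (e - a) * P (d - c) - P (d - a) * P (e - c)) * Q (c - b) :=
  stmt_9_general P Q hP0 hP1 hP hQ a b c d e
end

section
/- For all integers n, h, k: F(n+h)·L(n+k) − F(n)·L(n+h+k) = (−1)^n · F(h)·L(k), where (−1)^n denotes the integer power (−1)^n extended to integer exponents (equal to 1 for even n and −1 for odd n). -/
/-!
For sequences `G`, `H` satisfying the Fibonacci recurrence, the quantity
`D n = G (n + h) * H (n + k) - G n * H (n + h + k)` changes sign when `n` increases by one, so
`D n = (-1)^n * D 0 = (-1)^n * (G h * H k - G 0 * H (h + k))`; for `G = F` the last term vanishes.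
The sum `D (n + 1) + D n` is itself Fibonacci-like in `h`, so it vanishes identically as soon as it
vanishes at `h = 0` and `h = 1`, where it reduces to the recurrences.
-/

def IsFibonacciLike {R : Type*} [Add R] (G : ℤ → R) : Prop :=
  ∀ n, G (n + 2) = G (n + 1) + G n

theorem isFibonacciLike_of_eq_add {R : Type*} [Add R] {G : ℤ → R}
    (hG : ∀ n, G n = G (n - 1) + G (n - 2)) : IsFibonacciLike G := fun n => by
  simpa [add_sub_assoc] using hG (n + 2)

theorem eq_negOnePow_smul_of_succ_eq_neg {M : Type*} [AddCommGroup M] {X : ℤ → M}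
    (hX : ∀ n, X (n + 1) = -X n) (n : ℤ) : X n = n.negOnePow • X 0 := by
  induction n using Int.induction_on with
  | zero => simp
  | succ i ih => rw [hX, ih, Int.negOnePow_succ, Units.neg_smul]
  | pred i ih =>
    rw [← neg_neg (X _), ← hX, sub_add_cancel, ih, Int.negOnePow_sub, Int.negOnePow_one,
      mul_neg_one, Units.neg_smul]

namespace IsFibonacciLike

theorem eq_zero {R : Type*} [AddGroup R] {G : ℤ → R} (hG : IsFibonacciLike G)
    (h0 : G 0 = 0) (h1 : G 1 = 0) (n : ℤ) : G n = 0 := by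
  suffices ∀ n : ℤ, G n = 0 ∧ G (n + 1) = 0 from (this n).1
  intro n
  induction n using Int.induction_on with
  | zero => simpa using ⟨h0, h1⟩
  | succ i ih =>
    refine ⟨ih.2, ?_⟩
    rw [add_assoc, one_add_one_eq_two, hG, ih.1, ih.2, add_zero]
  | pred i ih =>
    refine ⟨?_, by rw [sub_add_cancel]; exact ih.1⟩
    have h := hG (-i - 1)
    rw [show -(i : ℤ) - 1 + 2 = -i + 1 by ring, show -(i : ℤ) - 1 + 1 = -i by ring, ih.1, ih.2,
      zero_add] at h
    exact h.symm

variable {R : Type*} [CommRing R] {G H : ℤ → R}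

theorem mul_sub_mul_succ (hG : IsFibonacciLike G) (hH : IsFibonacciLike H) (n h k : ℤ) :
    G (n + 1 + h) * H (n + 1 + k) - G (n + 1) * H (n + 1 + h + k)
      = -(G (n + h) * H (n + k) - G n * H (n + h + k)) := by
  have hE : IsFibonacciLike fun j => G (n + 1 + j) * H (n + 1 + k) - G (n + 1) * H (n + 1 + j + k)
      + (G (n + j) * H (n + k) - G n * H (n + j + k)) := fun m => by
    linear_combination (norm := ring_nf) H (n + 1 + k) * hG (n + 1 + m)
      - G (n + 1) * hH (n + 1 + m + k) + H (n + k) * hG (n + m) - G n * hH (n + m + k)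
  have hE1 : G (n + 1 + 1) * H (n + 1 + k) - G (n + 1) * H (n + 1 + 1 + k)
      + (G (n + 1) * H (n + k) - G n * H (n + 1 + k)) = 0 := by
    linear_combination (norm := ring_nf) H (n + k + 1) * hG n - G (n + 1) * hH (n + k)
  exact eq_neg_of_add_eq_zero_left (hE.eq_zero (by simp) hE1 h)

theorem mul_sub_mul_eq (hG : IsFibonacciLike G) (hH : IsFibonacciLike H) (n h k : ℤ) :
    G (n + h) * H (n + k) - G n * H (n + h + k)
      = n.negOnePow • (G h * H k - G 0 * H (h + k)) := by
  simpa using eq_negOnePow_smul_of_succ_eq_neg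
    (X := fun n => G (n + h) * H (n + k) - G n * H (n + h + k)) (mul_sub_mul_succ hG hH · h k) n

end IsFibonacciLike

theorem stmt_10_general (F L : ℤ → ℤ)
    (hF0 : F 0 = 0)
    (hF : ∀ n : ℤ, F n = F (n - 1) + F (n - 2))
    (hL : ∀ n : ℤ, L n = L (n - 1) + L (n - 2))
    (n h k : ℤ) :
    F (n + h) * L (n + k) - F n * L (n + h + k)
      = (n.negOnePow : ℤ) * F h * L k := by
  rw [(isFibonacciLike_of_eq_add hF).mul_sub_mul_eq (isFibonacciLike_of_eq_add hL), hF0,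
    zero_mul, sub_zero, Units.smul_def, smul_eq_mul, mul_assoc]

/-- `F(n+h)·L(n+k) − F(n)·L(n+h+k) = (−1)^n·F(h)·L(k)` for Fibonacci `F` and
Lucas `L` extended to all integers. -/
theorem stmt_10 (F L : ℤ → ℤ)
    (hF0 : F 0 = 0) (hF1 : F 1 = 1)
    (hF : ∀ n : ℤ, F n = F (n - 1) + F (n - 2))
    (hL0 : L 0 = 2) (hL1 : L 1 = 1)
    (hL : ∀ n : ℤ, L n = L (n - 1) + L (n - 2))
    (n h k : ℤ) :
    F (n + h) * L (n + k) - F n * L (n + h + k)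
      = (n.negOnePow : ℤ) * F h * L k :=
  stmt_10_general F L hF0 hF hL n h k
end

section
/- For all integers n, h, k: J(n+h)·j(n+k) − J(n)·j(n+h+k) = (−1)^n · 2^n · J(h)·j(k), where (−1)^n and 2^n denote powers in ℚ with integer exponent n. -/
/-!
Both sequences solve `x(n) = x(n-1) + 2 x(n-2)`, whose characteristic roots are `2` and `-1`.
Since a solution on `ℤ` is determined by its values at `0` and `1`, the Binet forms
`J n = (2^n - (-1)^n) / 3` and `j n = 2^n + (-1)^n` hold for every integer `n`, and the identity
becomes a polynomial identity in the powers of the two roots.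
-/

section LinearRecurrence

variable {K : Type*} [Field K] {a b : K}

theorem eq_of_linearRecurrence_of_eq_zero_of_eq_one (hb : b ≠ 0) {f g : ℤ → K}
    (hf : ∀ n, f n = a * f (n - 1) + b * f (n - 2))
    (hg : ∀ n, g n = a * g (n - 1) + b * g (n - 2))
    (h0 : f 0 = g 0) (h1 : f 1 = g 1) : f = g := by
  have step : ∀ n, f n = g n → f (n + 1) = g (n + 1) → f (n + 2) = g (n + 2) := by
    intro n e0 e1
    rw [hf, hg, add_sub_assoc, add_sub_cancel_right]
    norm_num [e0, e1]
  -- Going down uses `b ≠ 0`: `x(n) = (x(n+2) - a x(n+1)) / b`.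
  have step_back : ∀ n, f (n + 1) = g (n + 1) → f (n + 2) = g (n + 2) → f n = g n := by
    intro n e1 e2
    have hfn : f (n + 2) = a * f (n + 1) + b * f n := by
      rw [hf, add_sub_assoc, add_sub_cancel_right]; norm_num
    have hgn : g (n + 2) = a * g (n + 1) + b * g n := by
      rw [hg, add_sub_assoc, add_sub_cancel_right]; norm_num
    have : b * f n = b * g n := by linear_combination e2 - a * e1 - hfn + hgn
    exact mul_left_cancel₀ hb this
  suffices ∀ n : ℤ, f n = g n ∧ f (n + 1) = g (n + 1) from funext fun n => (this n).1
  intro n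
  induction n using Int.induction_on with
  | zero => exact ⟨h0, by simpa using h1⟩
  | succ i ih => exact ⟨ih.2, by simpa [add_assoc] using step i ih.1 ih.2⟩
  | pred i ih =>
    have e1 : f (-i - 1 + 1) = g (-i - 1 + 1) := by simpa using ih.1
    have e2 : f (-i - 1 + 2) = g (-i - 1 + 2) := by
      rw [show -(i : ℤ) - 1 + 2 = -i + 1 by ring]; exact ih.2
    exact ⟨step_back _ e1 e2, e1⟩

theorem zpow_eq_linearRecurrence {r : K} (hr : r ≠ 0) (hroot : r ^ 2 = a * r + b) (n : ℤ) :
    r ^ n = a * r ^ (n - 1) + b * r ^ (n - 2) := by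
  have hn : r ^ n = r ^ (n - 2) * r ^ 2 := by
    rw [← zpow_natCast, ← zpow_add₀ hr]; norm_num
  have hn1 : r ^ (n - 1) = r ^ (n - 2) * r := by
    rw [← zpow_add_one₀ hr]; ring_nf
  rw [hn, hn1, hroot]; ring

theorem add_zpow_eq_linearRecurrence {r s : K} (hr : r ≠ 0) (hs : s ≠ 0)
    (hr2 : r ^ 2 = a * r + b) (hs2 : s ^ 2 = a * s + b) (α β : K) (n : ℤ) :
    α * r ^ n + β * s ^ n
      = a * (α * r ^ (n - 1) + β * s ^ (n - 1)) + b * (α * r ^ (n - 2) + β * s ^ (n - 2)) := by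
  rw [zpow_eq_linearRecurrence hr hr2 n, zpow_eq_linearRecurrence hs hs2 n]
  ring

end LinearRecurrence

theorem zpow_sub_zpow_mul_zpow_add_zpow_identity {K : Type*} [Field K] {r s : K} (hr : r ≠ 0)
    (hs : s ≠ 0) (n h k : ℤ) :
    (r ^ (n + h) - s ^ (n + h)) * (r ^ (n + k) + s ^ (n + k))
        - (r ^ n - s ^ n) * (r ^ (n + h + k) + s ^ (n + h + k))
      = s ^ n * r ^ n * (r ^ h - s ^ h) * (r ^ k + s ^ k) := by
  simp only [zpow_add₀ hr, zpow_add₀ hs]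
  ring

/-- `J(n+h)·j(n+k) − J(n)·j(n+h+k) = (−1)^n·2^n·J(h)·j(k)` for Jacobsthal `J`
and Jacobsthal–Lucas `j` extended to all integers. -/
theorem stmt_11 (J j : ℤ → ℚ)
    (hJ0 : J 0 = 0) (hJ1 : J 1 = 1)
    (hJ : ∀ n : ℤ, J n = J (n - 1) + 2 * J (n - 2))
    (hj0 : j 0 = 2) (hj1 : j 1 = 1)
    (hj : ∀ n : ℤ, j n = j (n - 1) + 2 * j (n - 2))
    (n h k : ℤ) :
    J (n + h) * j (n + k) - J n * j (n + h + k)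
      = (-1 : ℚ) ^ n * (2 : ℚ) ^ n * J h * j k := by
  have hroot₁ : (2 : ℚ) ^ 2 = 1 * 2 + 2 := by norm_num
  have hroot₂ : (-1 : ℚ) ^ 2 = 1 * -1 + 2 := by norm_num
  have binet :=
    add_zpow_eq_linearRecurrence two_ne_zero (neg_ne_zero.2 one_ne_zero) hroot₁ hroot₂
  have hJ_eq : J = fun m => 1 / 3 * 2 ^ m + (-1 / 3) * (-1) ^ m :=
    eq_of_linearRecurrence_of_eq_zero_of_eq_one two_ne_zero (a := 1) (by simpa using hJ)
      (binet _ _) (by norm_num [hJ0]) (by norm_num [hJ1])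
  have hj_eq : j = fun m => 1 * 2 ^ m + 1 * (-1) ^ m :=
    eq_of_linearRecurrence_of_eq_zero_of_eq_one two_ne_zero (a := 1) (by simpa using hj)
      (binet _ _) (by norm_num [hj0]) (by norm_num [hj1])
  subst hJ_eq hj_eq
  linear_combination (1 / 3 : ℚ) *
    zpow_sub_zpow_mul_zpow_add_zpow_identity (r := (2 : ℚ)) (s := -1) two_ne_zero
      (neg_ne_zero.2 one_ne_zero) n h k
end

section
/- Catalan's identity for Jacobsthal numbers: for all integers d, a: J(d)² − J(d−a)·J(d+a) = (−1)^(d−a) · 2^(d−a) · J(a)², where (−1)^(d−a) and 2^(d−a) denote powers in ℚ with integer exponent d−a. -/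
/-! Both `J` and `n ↦ (2 ^ n - (-1) ^ n) / 3` satisfy the Jacobsthal recurrence and agree at `0` and `1`;
since the coefficient `2` of `J (n - 2)` is invertible, the recurrence can be run backwards as well as
forwards, so they agree on all of `ℤ`. Catalan's identity then holds for every difference of powers
`(x ^ n - y ^ n) / c` with `x y ≠ 0`, with factor `(x * y) ^ (d - a)`, by direct expansion. -/

section

variable {K : Type*} [Field K]

theorem Int.eq_of_linear_recurrence {f g : ℤ → K} {p q : K} (hq : q ≠ 0)
    (hf : ∀ n, f n = p * f (n - 1) + q * f (n - 2))
    (hg : ∀ n, g n = p * g (n - 1) + q * g (n - 2))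
    (h0 : f 0 = g 0) (h1 : f 1 = g 1) : f = g := by
  suffices h : ∀ n : ℤ, f n = g n ∧ f (n + 1) = g (n + 1) from funext fun n => (h n).1
  intro n
  induction n using Int.induction_on with
  | zero => exact ⟨h0, by simpa using h1⟩
  | succ k ih =>
    refine ⟨ih.2, ?_⟩
    have hfk := hf (k + 1 + 1)
    have hgk := hg (k + 1 + 1)
    simp only [add_sub_cancel_right, show (k : ℤ) + 1 + 1 - 2 = k by ring] at hfk hgk
    rw [hfk, hgk, ih.1, ih.2]
  | pred k ih =>
    refine ⟨?_, by simpa using ih.1⟩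
    have hfk := hf (-k + 1)
    have hgk := hg (-k + 1)
    simp only [add_sub_cancel_right, show -(k : ℤ) + 1 - 2 = -k - 1 by ring] at hfk hgk
    have hq' : q * f (-k - 1) = q * g (-k - 1) := by
      linear_combination hgk - hfk + ih.2 - p * ih.1
    exact mul_left_cancel₀ hq hq'

theorem zpow_linear_recurrence {r p q : K} (hr0 : r ≠ 0) (hr : r ^ 2 = p * r + q) (n : ℤ) :
    r ^ n = p * r ^ (n - 1) + q * r ^ (n - 2) := by
  have hn : r ^ n = r ^ (n - 2) * r ^ 2 := by
    rw [← zpow_natCast, ← zpow_add₀ hr0]; congr 1; push_cast; ring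
  have hn1 : r ^ (n - 1) = r ^ (n - 2) * r := by
    rw [← zpow_add_one₀ hr0]; congr 1; ring
  rw [hn, hn1, hr]; ring

theorem zpow_sub_zpow_div_catalan {x y : K} (hx : x ≠ 0) (hy : y ≠ 0) (c : K) (d a : ℤ) :
    ((x ^ d - y ^ d) / c) ^ 2 - (x ^ (d - a) - y ^ (d - a)) / c * ((x ^ (d + a) - y ^ (d + a)) / c)
      = (x * y) ^ (d - a) * ((x ^ a - y ^ a) / c) ^ 2 := by
  have hxa : x ^ a ≠ 0 := zpow_ne_zero a hx
  have hya : y ^ a ≠ 0 := zpow_ne_zero a hy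
  rw [mul_zpow, zpow_sub₀ hx, zpow_sub₀ hy, zpow_add₀ hx, zpow_add₀ hy]
  field_simp
  ring

end

theorem jacobsthal_eq_closed_form (J : ℤ → ℚ)
    (hJ0 : J 0 = 0) (hJ1 : J 1 = 1)
    (hJ : ∀ n : ℤ, J n = J (n - 1) + 2 * J (n - 2)) :
    J = fun n => ((2 : ℚ) ^ n - (-1 : ℚ) ^ n) / 3 := by
  refine Int.eq_of_linear_recurrence (p := 1) (q := 2) two_ne_zero (by simpa using hJ) (fun n => ?_)
    (by simp [hJ0]) (by norm_num [hJ1])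
  have h2 := zpow_linear_recurrence (p := (1 : ℚ)) (q := 2) two_ne_zero (by norm_num) n
  have hm1 := zpow_linear_recurrence (p := (1 : ℚ)) (q := 2) (neg_ne_zero.mpr one_ne_zero)
    (by norm_num) n
  linear_combination (h2 - hm1) / 3

/-- Catalan's identity for Jacobsthal numbers extended to all integers. -/
theorem stmt_14 (J : ℤ → ℚ)
    (hJ0 : J 0 = 0) (hJ1 : J 1 = 1)
    (hJ : ∀ n : ℤ, J n = J (n - 1) + 2 * J (n - 2))
    (d a : ℤ) :
    J d ^ 2 - J (d - a) * J (d + a)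
      = (-1 : ℚ) ^ (d - a) * (2 : ℚ) ^ (d - a) * J a ^ 2 := by
  rw [jacobsthal_eq_closed_form J hJ0 hJ1 hJ, ← mul_zpow, mul_comm (-1 : ℚ)]
  exact zpow_sub_zpow_div_catalan two_ne_zero (neg_ne_zero.mpr one_ne_zero) 3 d a
end

section
/- For all integers u, v, w with u + v = w: (−1)^u·L(u)² + (−1)^v·L(v)² + (−1)^w·L(w)² = (−1)^w·L(u)·L(v)·L(w) + 4, where (−1)^n denotes the integer power (−1)^n extended to integer exponents. -/
/-! The identity follows from the product formula `L m * L n = L (m + n) + (-1)^n L (m - n)`,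
applied to the pairs `(u, u)`, `(v, v)`, `(u, v)` and `(u + v, u - v)`; the product formula itself
holds because, for fixed `m`, both sides satisfy the Fibonacci recurrence in `n` and agree at
`n = 0, 1`. -/

section FibonacciRecurrence

variable {G : Type*} [AddCommGroup G]

theorem Int.eq_zero_of_fib_rec {f : ℤ → G} (hf : ∀ n, f (n + 2) = f (n + 1) + f n)
    (h0 : f 0 = 0) (h1 : f 1 = 0) (n : ℤ) : f n = 0 := by
  suffices h : ∀ n : ℤ, f n = 0 ∧ f (n + 1) = 0 from (h n).1
  intro n
  induction n using Int.induction_on with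
  | zero => exact ⟨h0, by simpa using h1⟩
  | succ i ih => exact ⟨ih.2, by rw [add_assoc, one_add_one_eq_two, hf, ih.1, ih.2, add_zero]⟩
  | pred i ih =>
    have h := hf (-i - 1)
    rw [show -(i : ℤ) - 1 + 2 = -i + 1 by ring, sub_add_cancel, ih.1, ih.2] at h
    exact ⟨by simpa using h.symm, by rw [sub_add_cancel]; exact ih.1⟩

theorem Int.eq_of_fib_rec {f g : ℤ → G} (hf : ∀ n, f (n + 2) = f (n + 1) + f n)
    (hg : ∀ n, g (n + 2) = g (n + 1) + g n) (h0 : f 0 = g 0) (h1 : f 1 = g 1) : f = g := by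
  funext n
  refine sub_eq_zero.mp (Int.eq_zero_of_fib_rec (f := f - g) (fun n => ?_) ?_ ?_ n)
  · simp only [Pi.sub_apply, hf, hg]
    abel
  · simp [h0]
  · simp [h1]

end FibonacciRecurrence

theorem lucas_mul_lucas {L : ℤ → ℤ} (hL0 : L 0 = 2) (hL1 : L 1 = 1)
    (hL : ∀ n, L (n + 2) = L (n + 1) + L n) (m n : ℤ) :
    L m * L n = L (m + n) + n.negOnePow * L (m - n) := by
  revert n
  refine congrFun (Int.eq_of_fib_rec (fun n => ?_) (fun n => ?_) ?_ ?_)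
  · simp only [hL n]
    ring
  · have hsum := hL (m + n)
    have hdiff := hL (m - (n + 2))
    rw [show m - (n + 2) + 2 = m - n by ring, show m - (n + 2) + 1 = m - (n + 1) by ring] at hdiff
    rw [show m + (n + 2) = m + n + 2 by ring, show m + (n + 1) = m + n + 1 by ring, hsum,
      Int.negOnePow_add n 2, Int.negOnePow_even 2 even_two, Int.negOnePow_succ]
    push_cast
    linear_combination -(n.negOnePow : ℤ) * hdiff
  · simp [hL0, mul_two]
  · have h := hL (m - 1)
    rw [show m - 1 + 2 = m + 1 by ring, sub_add_cancel] at h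
    simp only [hL1, Int.negOnePow_one, Units.val_neg, Units.val_one, h]
    ring

/-- Three-square identity for Lucas numbers extended to all integers. -/
theorem stmt_16 (L : ℤ → ℤ)
    (hL0 : L 0 = 2) (hL1 : L 1 = 1)
    (hL : ∀ n : ℤ, L n = L (n - 1) + L (n - 2))
    (u v w : ℤ) (huvw : u + v = w) :
    (u.negOnePow : ℤ) * L u ^ 2 + (v.negOnePow : ℤ) * L v ^ 2
        + (w.negOnePow : ℤ) * L w ^ 2
      = (w.negOnePow : ℤ) * L u * L v * L w + 4 := by
  have hrec : ∀ n, L (n + 2) = L (n + 1) + L n := fun n => by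
    simpa [add_sub_assoc] using hL (n + 2)
  have hmul := lucas_mul_lucas hL0 hL1 hrec
  subst huvw
  have huu := hmul u u
  have hvv := hmul v v
  have huv := hmul u v
  have hsum_diff := hmul (u + v) (u - v)
  rw [sub_self, hL0] at huu hvv
  rw [show u + v + (u - v) = u + u by ring, show u + v - (u - v) = v + v by ring,
    Int.negOnePow_sub] at hsum_diff
  simp only [Int.negOnePow_add, Units.val_mul] at hsum_diff ⊢
  linear_combination (u.negOnePow : ℤ) * huu + (v.negOnePow : ℤ) * hvv
    - (u.negOnePow * v.negOnePow * L (u + v) : ℤ) * huv - (u.negOnePow : ℤ) * hsum_diff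
    + (2 - v.negOnePow * L (v + v) : ℤ) * Int.units_coe_mul_self u.negOnePow
    + (2 - u.negOnePow * L (u + v) * L (u - v) : ℤ) * Int.units_coe_mul_self v.negOnePow
end

section
/- Let a, b, c, d, e, m be integers and let k be a nonnegative integer such that F(d−c)·F(e−b) − F(e−c)·F(d−b) ≠ 0 and F(d−a)·F(e−c) − F(e−a)·F(d−c) ≠ 0 (as rational numbers). Then ∑_{r=0}^{k} C(k,r) · ((F(d−c)·F(e−b) − F(e−c)·F(d−b)) / (F(d−a)·F(e−c) − F(e−a)·F(d−c)))^r · F(m − (b−c)·k + (b−a)·r) = ((F(d−a)·F(e−b) − F(e−a)·F(d−b)) / (F(d−a)·F(e−c) − F(e−a)·F(d−c)))^k · F(m), where C(k,r) denotes the binomial coefficient and the identity is an equality of rational numbers. -/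
/-!
The addition formula `F (x - t) = F x * F (1 - t) + F (x - 1) * F (-t)` puts the three rows of
the matrix `(F (x - t))` with `x ∈ {s, d, e}`, `t ∈ {a, b, c}` in a plane, so its determinant
vanishes. Its cofactor expansion along the row of `s` reads `Y F(s - b) + X F(s - a) = Z F(s - c)`,
with `X`, `Y`, `Z` the `2 × 2` minors of the statement. Divided by `Y` and with `s = m + c`, this
is one step `F(m - q) + x F(m - q + p) = y F m` of a binomial recursion whose `k`-fold iterate is
the identity.
-/

open Finset

theorem eq_of_fib_rec {R : Type*} [Ring R] {G H : ℤ → R}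
    (hG : ∀ n, G (n + 2) = G (n + 1) + G n) (hH : ∀ n, H (n + 2) = H (n + 1) + H n)
    (h0 : G 0 = H 0) (h1 : G 1 = H 1) : G = H := by
  suffices h : ∀ n, G n = H n ∧ G (n + 1) = H (n + 1) from funext fun n ↦ (h n).1
  intro n
  induction n using Int.induction_on with
  | zero => exact ⟨h0, h1⟩
  | succ n ih =>
    refine ⟨ih.2, ?_⟩
    rw [add_assoc, one_add_one_eq_two, hG, hH, ih.1, ih.2]
  | pred n ih =>
    have hG' := hG (-n - 1)
    have hH' := hH (-n - 1)
    rw [show -(n : ℤ) - 1 + 2 = -n + 1 by ring, show -(n : ℤ) - 1 + 1 = -n by ring] at hG' hH'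
    refine ⟨?_, by rw [sub_add_cancel]; exact ih.1⟩
    rw [eq_sub_of_add_eq' hG'.symm, eq_sub_of_add_eq' hH'.symm, ih.1, ih.2]

theorem fib_rec_add {R : Type*} [CommRing R] {F : ℤ → R} (hF0 : F 0 = 0) (hF1 : F 1 = 1)
    (hF : ∀ n, F (n + 2) = F (n + 1) + F n) (x y : ℤ) :
    F (x + y) = F x * F (y + 1) + F (x - 1) * F y := by
  refine congrFun (eq_of_fib_rec (G := fun y ↦ F (x + y))
    (H := fun y ↦ F x * F (y + 1) + F (x - 1) * F y) (fun n ↦ ?_) (fun n ↦ ?_) ?_ ?_) y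
  · simpa only [add_assoc] using hF (x + n)
  · have h3 := hF (n + 1)
    rw [show n + 1 + 2 = n + 2 + 1 by ring, show n + 1 + 1 = n + 2 by ring] at h3
    rw [show n + 1 + 1 = n + 2 by ring]
    linear_combination F x * h3 + F (x - 1) * hF n
  · simp [hF0, hF1]
  · have hF2 : F 2 = 1 := by simpa [hF0, hF1] using hF 0
    have hx := hF (x - 1)
    rw [sub_add_cancel, show x - 1 + 2 = x + 1 by ring] at hx
    rw [one_add_one_eq_two, hF2, hF1, hx]
    ring

theorem fib_rec_minor_relation {R : Type*} [CommRing R] {F : ℤ → R} (hF0 : F 0 = 0)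
    (hF1 : F 1 = 1) (hF : ∀ n, F (n + 2) = F (n + 1) + F n) (a b c d e s : ℤ) :
    (F (d - a) * F (e - c) - F (e - a) * F (d - c)) * F (s - b)
      + (F (d - c) * F (e - b) - F (e - c) * F (d - b)) * F (s - a)
      = (F (d - a) * F (e - b) - F (e - a) * F (d - b)) * F (s - c) := by
  have split (x t : ℤ) : F (x - t) = F x * F (1 - t) + F (x - 1) * F (-t) := by
    rw [sub_eq_add_neg, fib_rec_add hF0 hF1 hF, neg_add_eq_sub]
  rw [split s a, split s b, split s c, split d a, split d b, split d c, split e a, split e b,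
    split e c]
  ring

theorem sum_choose_mul_pow_of_step {R : Type*} [CommSemiring R] {u : ℤ → R} {p q : ℤ} {x y : R}
    (step : ∀ m, u (m - q) + x * u (m - q + p) = y * u m) (k : ℕ) (m : ℤ) :
    ∑ r ∈ range (k + 1), (k.choose r : R) * x ^ r * u (m - q * k + p * r) = y ^ k * u m := by
  induction k generalizing m with
  | zero => simp
  | succ k ih =>
    have split := sum_choose_succ_mul (fun r _ ↦ x ^ r * u (m - q * (k + 1) + p * r)) k
    simp only [← mul_assoc] at split
    push_cast
    rw [split]
    calc _ = y ^ k * u (m - q) + x * (y ^ k * u (m - q + p)) := by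
          rw [← ih, ← ih, mul_sum]
          congr 1 <;> refine sum_congr rfl fun r _ ↦ ?_ <;> push_cast <;> ring_nf
      _ = y ^ (k + 1) * u m := by rw [pow_succ, mul_assoc, ← step]; ring

theorem stmt_19_general (F : ℤ → ℤ)
    (hF0 : F 0 = 0) (hF1 : F 1 = 1)
    (hF : ∀ n : ℤ, F n = F (n - 1) + F (n - 2))
    (a b c d e m : ℤ) (k : ℕ)
    (h2 : (F (d - a) : ℚ) * F (e - c) - F (e - a) * F (d - c) ≠ 0) :
    ∑ r ∈ Finset.range (k + 1),
      (k.choose r : ℚ) *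
        (((F (d - c) : ℚ) * F (e - b) - F (e - c) * F (d - b)) /
            ((F (d - a) : ℚ) * F (e - c) - F (e - a) * F (d - c))) ^ r *
        F (m - (b - c) * (k : ℤ) + (b - a) * (r : ℤ))
      = (((F (d - a) : ℚ) * F (e - b) - F (e - a) * F (d - b)) /
            ((F (d - a) : ℚ) * F (e - c) - F (e - a) * F (d - c))) ^ k
          * F m := by
  have hF' (n : ℤ) : F (n + 2) = F (n + 1) + F n := by
    rw [hF (n + 2)]
    ring_nf
  refine sum_choose_mul_pow_of_step (u := fun n ↦ (F n : ℚ)) (fun n ↦ ?_) k m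
  have relation := congrArg (fun z : ℤ ↦ (z : ℚ))
    (fib_rec_minor_relation hF0 hF1 hF' a b c d e (n + c))
  push_cast at relation
  rw [show n + c - c = n by ring, show n + c - b = n - (b - c) by ring,
    show n + c - a = n - (b - c) + (b - a) by ring] at relation
  rw [div_mul_eq_mul_div, div_mul_eq_mul_div, eq_div_iff h2, add_mul, div_mul_cancel₀ _ h2]
  linear_combination relation

/-- Weighted binomial sum identity for the Fibonacci numbers extended to all
integers, as an identity of rational numbers. -/
theorem stmt_19 (F : ℤ → ℤ)
    (hF0 : F 0 = 0) (hF1 : F 1 = 1)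
    (hF : ∀ n : ℤ, F n = F (n - 1) + F (n - 2))
    (a b c d e m : ℤ) (k : ℕ)
    (h1 : (F (d - c) : ℚ) * F (e - b) - F (e - c) * F (d - b) ≠ 0)
    (h2 : (F (d - a) : ℚ) * F (e - c) - F (e - a) * F (d - c) ≠ 0) :
    ∑ r ∈ Finset.range (k + 1),
      (k.choose r : ℚ) *
        (((F (d - c) : ℚ) * F (e - b) - F (e - c) * F (d - b)) /
            ((F (d - a) : ℚ) * F (e - c) - F (e - a) * F (d - c))) ^ r *
        F (m - (b - c) * (k : ℤ) + (b - a) * (r : ℤ))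
      = (((F (d - a) : ℚ) * F (e - b) - F (e - a) * F (d - b)) /
            ((F (d - a) : ℚ) * F (e - c) - F (e - a) * F (d - c))) ^ k
          * F m :=
  stmt_19_general F hF0 hF1 hF a b c d e m k h2
end
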